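/- arXiv:2404.18642 — 9 statements merged into one kernel-verified Lean document; each statement's English description precedes it below -/
import Mathlib

section
/- For every integer n ≥ 2, the polynomial f_n(x) = x³ - (n-1)x² - (n+2)x - 1 has a real root λ₀ satisfying n + 2/n - 3/n² < λ₀ < n + 2/n + 3/n². -/
theorem stmt_4 (n : ℤ) (hn : 2 ≤ n) :
    ∃ lam0 : ℝ,
      lam0 ^ 3 - ((n : ℝ) - 1) * lam0 ^ 2 - ((n : ℝ) + 2) * lam0 - 1 = 0 ∧
      (n : ℝ) + 2 / (n : ℝ) - 3 / (n : ℝ) ^ 2 < lam0 ∧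
      lam0 < (n : ℝ) + 2 / (n : ℝ) + 3 / (n : ℝ) ^ 2 := by
  have hn' : (2 : ℝ) ≤ (n : ℝ) := by exact_mod_cast hn
  have hpos : (0 : ℝ) < (n : ℝ) := by linarith
  set a : ℝ := (n : ℝ) + 2 / (n : ℝ) - 3 / (n : ℝ) ^ 2 with ha
  set b : ℝ := (n : ℝ) + 2 / (n : ℝ) + 3 / (n : ℝ) ^ 2 with hb
  set f : ℝ → ℝ := fun x => x ^ 3 - ((n : ℝ) - 1) * x ^ 2 - ((n : ℝ) + 2) * x - 1 with hf
  have hab : a < b := by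
    have : 0 < 3 / (n : ℝ) ^ 2 := by positivity
    simp only [ha, hb]; linarith
  have hcont : ContinuousOn f (Set.Icc a b) := by
    apply Continuous.continuousOn; fun_prop
  have hfa : f a < 0 := by
    have hne : (n : ℝ) ≠ 0 := ne_of_gt hpos
    have key : f a * (n : ℝ) ^ 6 =
        -2 * (n:ℝ)^6 + (n:ℝ)^5 - 14 * (n:ℝ)^4 + 14 * (n:ℝ)^3 - 27 * (n:ℝ)^2 + 54 * (n:ℝ) - 27 := by
      simp only [hf, ha]
      field_simp
      ring
    nlinarith [pow_pos hpos 6, pow_pos hpos 3, pow_pos hpos 4, pow_pos hpos 5,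
      sq_nonneg ((n:ℝ) - 1), mul_pos (pow_pos hpos 4) (sub_pos.mpr (lt_of_lt_of_le one_lt_two hn')),
      sq_nonneg (n:ℝ)]
  have hfb : 0 < f b := by
    have key : f b * (n : ℝ) ^ 6 =
        4 * (n:ℝ)^6 + 7 * (n:ℝ)^5 + 22 * (n:ℝ)^4 + 38 * (n:ℝ)^3 + 45 * (n:ℝ)^2 + 54 * (n:ℝ) + 27 := by
      simp only [hf, hb]
      field_simp
      ring
    nlinarith [pow_pos hpos 6, pow_pos hpos 3, pow_pos hpos 4, pow_pos hpos 5, sq_nonneg (n:ℝ)]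
  have h0 : (0 : ℝ) ∈ Set.Ioo (f a) (f b) := ⟨hfa, hfb⟩
  have := intermediate_value_Ioo (le_of_lt hab) hcont h0
  obtain ⟨x, hx, hfx⟩ := this
  exact ⟨x, hfx, hx.1, hx.2⟩
end

section
/- For every sufficiently large integer n, the polynomial f_n(x) = x³ - (n-1)x² - (n+2)x - 1 has a real root λ₁ with -1/n < λ₁ < -1/n + 2/n². More precisely, there exists n₀ such that for all n ≥ n₀ this holds. -/
theorem stmt_5 :
    ∃ n₀ : ℕ, ∀ n : ℕ, n₀ ≤ n →
      ∃ lam1 : ℝ,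
        lam1 ^ 3 - ((n : ℝ) - 1) * lam1 ^ 2 - ((n : ℝ) + 2) * lam1 - 1 = 0 ∧
        -1 / (n : ℝ) < lam1 ∧ lam1 < -1 / (n : ℝ) + 2 / (n : ℝ) ^ 2 := by
  refine ⟨2, fun n hn => ?_⟩
  have hn2 : (2 : ℝ) ≤ (n : ℝ) := by exact_mod_cast hn
  have hnpos : (0 : ℝ) < (n : ℝ) := by linarith
  set N : ℝ := (n : ℝ)
  set g : ℝ → ℝ := fun x => x ^ 3 - (N - 1) * x ^ 2 - (N + 2) * x - 1 with hg
  set a : ℝ := -1 / N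
  set b : ℝ := -1 / N + 2 / N ^ 2 with hb
  have hab : a < b := by
    have : (0 : ℝ) < 2 / N ^ 2 := by positivity
    simp only [hb]; linarith
  have hga : 0 < g a := by
    simp only [hg, a]
    have hN : N ≠ 0 := ne_of_gt hnpos
    field_simp
    nlinarith [mul_pos (pow_pos hnpos 3) (show (0:ℝ) < N^2 + N - 1 by nlinarith)]
  have hgb : g b < 0 := by
    simp only [hg, hb, a]
    have hN : N ≠ 0 := ne_of_gt hnpos
    have key : (-1 / N + 2 / N ^ 2) ^ 3 - (N - 1) * (-1 / N + 2 / N ^ 2) ^ 2 -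
        (N + 2) * (-1 / N + 2 / N ^ 2) - 1
        = (-(N^5) + N^4 - 9*N^3 + 10*N^2 - 12*N + 8) / N^6 := by
      field_simp
      ring
    rw [key, div_neg_iff]
    right
    refine ⟨?_, by positivity⟩
    nlinarith [mul_nonneg (pow_nonneg hnpos.le 4) (show (0:ℝ) ≤ N - 2 by linarith),
      mul_nonneg (pow_nonneg hnpos.le 3) (show (0:ℝ) ≤ N - 2 by linarith),
      mul_nonneg (pow_nonneg hnpos.le 2) (show (0:ℝ) ≤ N - 2 by linarith),
      mul_nonneg hnpos.le (show (0:ℝ) ≤ N - 2 by linarith)]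
  have hcont : ContinuousOn g (Set.Icc a b) := by
    apply Continuous.continuousOn
    simp only [hg]; continuity
  have h0 : (0 : ℝ) ∈ Set.Ioo (g b) (g a) := ⟨hgb, hga⟩
  have := intermediate_value_Ioo' (le_of_lt hab) hcont h0
  obtain ⟨lam, hlam, heq⟩ := this
  exact ⟨lam, heq, hlam.1, hlam.2⟩
end

section
/- For every sufficiently large integer n, the polynomial f_n(x) = x³ - (n-1)x² - (n+2)x - 1 has a real root λ₂ satisfying -1 - 2/n < λ₂ < -1 - 1/(2n). -/
theorem stmt_6 :
    ∃ n₀ : ℕ, ∀ n : ℕ, n₀ ≤ n →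
      ∃ lam2 : ℝ,
        lam2 ^ 3 - ((n : ℝ) - 1) * lam2 ^ 2 - ((n : ℝ) + 2) * lam2 - 1 = 0 ∧
        -1 - 2 / (n : ℝ) < lam2 ∧ lam2 < -1 - 1 / (2 * (n : ℝ)) := by
  use 2
  intro n hn
  have hn' : (2 : ℝ) ≤ (n : ℝ) := by exact_mod_cast hn
  have hpos : (0 : ℝ) < (n : ℝ) := by linarith
  set N : ℝ := (n : ℝ)
  set g : ℝ → ℝ := fun x => x ^ 3 - (N - 1) * x ^ 2 - (N + 2) * x - 1 with hg
  set a : ℝ := -1 - 2 / N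
  set b : ℝ := -1 - 1 / (2 * N)
  have hab : a ≤ b := by
    simp only [a, b]
    have h1 : 1 / (2 * N) ≤ 2 / N := by
      rw [div_le_div_iff₀ (by linarith) hpos]; nlinarith
    linarith
  have hga : g a < 0 := by
    simp only [hg, a]
    have h2 : (2 / N) * N = 2 := by field_simp
    nlinarith [sq_nonneg (2 / N), pow_pos (show (0:ℝ) < 2 / N by positivity) 3,
      sq_nonneg (1/N), mul_pos hpos hpos]
  have hgb : 0 < g b := by
    simp only [hg, b]
    have h2 : (1 / (2 * N)) * N = 1 / 2 := by field_simp
    have h3 : 1 / (2 * N) ≤ 1 / 4 := by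
      rw [div_le_div_iff₀ (by linarith) (by norm_num)]; linarith
    have h4 : 0 < 1 / (2 * N) := by positivity
    nlinarith [pow_le_pow_left₀ (le_of_lt h4) h3 2, pow_le_pow_left₀ (le_of_lt h4) h3 3]
  have hcont : ContinuousOn g (Set.Icc a b) := by
    apply Continuous.continuousOn; continuity
  have hmem : (0 : ℝ) ∈ Set.Ioo (g a) (g b) := ⟨hga, hgb⟩
  have := intermediate_value_Ioo hab hcont hmem
  obtain ⟨x, hx, hgx⟩ := this
  exact ⟨x, hgx, hx.1, hx.2⟩
end

section
/- For all sufficiently large n, the polynomial f_n(x) = x³ - (n-1)x² - (n+2)x - 1 has three distinct real roots. -/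
theorem stmt_7 :
    ∃ n₀ : ℕ, ∀ n : ℕ, n₀ ≤ n →
      ∃ a b c : ℝ, a < b ∧ b < c ∧
        a ^ 3 - ((n : ℝ) - 1) * a ^ 2 - ((n : ℝ) + 2) * a - 1 = 0 ∧
        b ^ 3 - ((n : ℝ) - 1) * b ^ 2 - ((n : ℝ) + 2) * b - 1 = 0 ∧
        c ^ 3 - ((n : ℝ) - 1) * c ^ 2 - ((n : ℝ) + 2) * c - 1 = 0 := by
  refine ⟨1, fun n hn => ?_⟩
  set N : ℝ := (n : ℝ) with hNdef
  have hN1 : (1 : ℝ) ≤ N := by rw [hNdef]; exact_mod_cast hn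
  set f : ℝ → ℝ := fun x => x ^ 3 - (N - 1) * x ^ 2 - (N + 2) * x - 1 with hf
  have hc : Continuous f := by unfold f; continuity
  have hfm2 : f (-2) < 0 := by simp only [hf]; nlinarith
  have hfm1 : f (-1) > 0 := by simp only [hf]; nlinarith
  have hf0 : f 0 < 0 := by simp only [hf]; norm_num
  have hf2n : f (2 * N) > 0 := by simp only [hf]; nlinarith
  obtain ⟨a, ha, ha0⟩ := intermediate_value_Ioo (by norm_num : (-2:ℝ) ≤ -1)
    hc.continuousOn (Set.mem_Ioo.mpr ⟨hfm2, hfm1⟩)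
  obtain ⟨b, hb, hb0⟩ := intermediate_value_Ioo' (by norm_num : (-1:ℝ) ≤ 0)
    hc.continuousOn (Set.mem_Ioo.mpr ⟨hf0, hfm1⟩)
  obtain ⟨c, hcm, hc0⟩ := intermediate_value_Ioo (by linarith : (0:ℝ) ≤ 2 * N)
    hc.continuousOn (Set.mem_Ioo.mpr ⟨hf0, hf2n⟩)
  exact ⟨a, b, c, lt_trans ha.2 hb.1, lt_trans hb.2 hcm.1, ha0, hb0, hc0⟩
end

section
/- As n → ∞, the largest real root λ₀(n) of f_n(x) = x³ - (n-1)x² - (n+2)x - 1 satisfies λ₀(n) - n - 2/n = O(1/n²), i.e. there exist constants C and n₀ with |λ₀(n) - n - 2/n| ≤ C/n² for all n ≥ n₀. -/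
/-- `f n x = x³ - (n-1)x² - (n+2)x - 1`. -/
noncomputable def f (n : ℕ) (x : ℝ) : ℝ :=
  x ^ 3 - ((n : ℝ) - 1) * x ^ 2 - ((n : ℝ) + 2) * x - 1

lemma fpos (n : ℕ) (x : ℝ) (hn : (1:ℝ) ≤ n) (hx : (n:ℝ) + 2/(n:ℝ) ≤ x) :
    0 < f n x := by
  have hn0 : (0:ℝ) < n := by linarith
  have hnx : (n:ℝ)^2 + 2 ≤ n * x := by
    have := mul_le_mul_of_nonneg_left hx (le_of_lt hn0)
    rw [mul_add, mul_div_cancel₀ _ (ne_of_gt hn0)] at this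
    nlinarith
  have hx1 : (1:ℝ) ≤ x := by nlinarith [div_pos (by norm_num : (0:ℝ)<2) hn0]
  unfold f
  nlinarith [mul_pos hn0 hn0, sq_nonneg (n*x - n^2 - 2), mul_le_mul_of_nonneg_left hnx (le_of_lt hn0), mul_le_mul_of_nonneg_right hnx (by linarith : (0:ℝ) ≤ x)]

lemma fneg (n : ℕ) (hn : (3:ℝ) ≤ n) :
    f n ((n:ℝ) + 2/(n:ℝ) - 2/(n:ℝ)^2) < 0 := by
  have hn0 : (0:ℝ) < n := by linarith
  have key : f n ((n:ℝ) + 2/(n:ℝ) - 2/(n:ℝ)^2)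
      = (-(n:ℝ)^6 + 2*n^5 - 8*n^4 + 8*n^3 - 20*n^2 + 24*n - 8) / n^6 := by
    unfold f
    field_simp
    ring
  rw [key]
  apply div_neg_of_neg_of_pos
  · nlinarith [sq_nonneg ((n:ℝ)^2 - 2*n), sq_nonneg ((n:ℝ)-3)]
  · positivity

theorem stmt_8 (lam0 : ℕ → ℝ)
    (hroot : ∀ n : ℕ, 1 ≤ n → f n (lam0 n) = 0)
    (hmax : ∀ n : ℕ, 1 ≤ n → ∀ x : ℝ, f n x = 0 → x ≤ lam0 n) :
    ∃ C : ℝ, ∃ n₀ : ℕ, ∀ n : ℕ, n₀ ≤ n →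
      |lam0 n - (n : ℝ) - 2 / (n : ℝ)| ≤ C / (n : ℝ) ^ 2 := by
  refine ⟨2, 3, fun n hn3 => ?_⟩
  have hn1 : 1 ≤ n := by omega
  have hnR : (3:ℝ) ≤ n := by exact_mod_cast hn3
  have hn0 : (0:ℝ) < n := by linarith
  have hcont : Continuous (f n) := by unfold f; fun_prop
  -- upper bound: lam0 n ≤ n + 2/n
  have hub : lam0 n ≤ (n:ℝ) + 2/(n:ℝ) := by
    by_contra h
    push_neg at h
    have := fpos n (lam0 n) (by linarith) (le_of_lt h)
    rw [hroot n hn1] at this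
    exact lt_irrefl 0 this
  -- lower bound via IVT
  have hab : (n:ℝ) + 2/(n:ℝ) - 2/(n:ℝ)^2 ≤ (n:ℝ) + 2/(n:ℝ) := by
    have : (0:ℝ) < 2/(n:ℝ)^2 := by positivity
    linarith
  have hIVT := intermediate_value_Icc hab (hcont.continuousOn)
  have h0mem : (0:ℝ) ∈ Set.Icc (f n ((n:ℝ) + 2/(n:ℝ) - 2/(n:ℝ)^2)) (f n ((n:ℝ) + 2/(n:ℝ))) :=
    ⟨le_of_lt (fneg n hnR), le_of_lt (fpos n _ (by linarith) le_rfl)⟩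
  obtain ⟨c, hc, hfc⟩ := hIVT h0mem
  have hlb : (n:ℝ) + 2/(n:ℝ) - 2/(n:ℝ)^2 ≤ lam0 n :=
    le_trans hc.1 (hmax n hn1 c hfc)
  rw [abs_le]
  constructor
  · linarith
  · have : (0:ℝ) < 2/(n:ℝ)^2 := by positivity
    linarith
end

section
/- As n → ∞, log λ₀(n) = log n + 2/n² + O(1/n³), where λ₀(n) is the largest real root of f_n(x) = x³ - (n-1)x² - (n+2)x - 1. -/
lemma f_cont (n : ℕ) : Continuous (f n) := by
  unfold f; fun_prop

lemma f_mono (n : ℕ) (x y : ℝ) (hm : (2:ℝ) ≤ n) (hx : (n:ℝ) ≤ x) (hxy : x ≤ y) :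
    f n x ≤ f n y := by
  unfold f
  nlinarith [sq_nonneg (x+y), sq_nonneg (x-y), sq_nonneg (x - n), sq_nonneg (y - n),
    mul_nonneg (sub_nonneg.2 hxy) (sub_nonneg.2 hx),
    mul_nonneg (sub_nonneg.2 hxy) (sub_nonneg.2 (hx.trans hxy))]

lemma log_bound (m r : ℝ) (hm : 4 ≤ m) (h1 : 1 + 2/m^2 - 3/m^3 ≤ r) (h2 : r ≤ 1 + 2/m^2) :
    |Real.log r - 2/m^2| ≤ 7/m^3 := by
  have hm0 : (0:ℝ) < m := by linarith
  have hr1 : 1 ≤ r := by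
    have h3 : 3/m^3 ≤ 2/m^2 := by
      rw [div_le_div_iff₀ (by positivity) (by positivity)]; nlinarith
    linarith
  have hr0 : (0:ℝ) < r := by linarith
  have hup : Real.log r ≤ r - 1 := Real.log_le_sub_one_of_pos hr0
  have hlow : 1 - r⁻¹ ≤ Real.log r := by
    have h := Real.log_le_sub_one_of_pos (show (0:ℝ) < r⁻¹ by positivity)
    rw [Real.log_inv] at h
    have hinv : r⁻¹ ≤ 1 := by
      rw [inv_le_one_iff₀]; right; exact hr1
    linarith
  have key : (1 - r⁻¹) - ((r-1) - (r-1)^2) = (r-1)^3/r := by field_simp; ring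
  have hcube : 0 ≤ (r-1)^3/r :=
    div_nonneg (pow_nonneg (by linarith) 3) hr0.le
  have h3 : (r-1) - (r-1)^2 ≤ Real.log r := by linarith
  set s : ℝ := r - 1 with hs
  have hs0 : 0 ≤ s := by simp [hs]; linarith
  have hsl : 2*m - 3 ≤ s * m^3 := by
    have h' : (2*m-3)/m^3 ≤ s := by
      have e : 2/m^2 - 3/m^3 = (2*m-3)/m^3 := by field_simp
      have : 2/m^2 - 3/m^3 ≤ s := by simp [hs]; linarith
      linarith [e ▸ this]
    calc 2*m-3 = ((2*m-3)/m^3)*m^3 := by field_simp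
      _ ≤ s*m^3 := mul_le_mul_of_nonneg_right h' (by positivity)
  have hsu : s * m^2 ≤ 2 := by
    have h' : s ≤ 2/m^2 := by simp [hs]; linarith
    calc s*m^2 ≤ (2/m^2)*m^2 := mul_le_mul_of_nonneg_right h' (by positivity)
      _ = 2 := by field_simp
  have hnum : 0 ≤ s*m^3 - s^2*m^3 - 2*m + 7 := by
    nlinarith [sq_nonneg (s*m^2), mul_nonneg (sq_nonneg s) (pow_nonneg hm0.le 3),
      mul_nonneg hs0 hm0.le]
  rw [abs_le]
  constructor
  · have e : s - s^2 - 2/m^2 + 7/m^3 = (s*m^3 - s^2*m^3 - 2*m + 7)/m^3 := by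
      field_simp
    have h4 : 0 ≤ s - s^2 - 2/m^2 + 7/m^3 := by
      rw [e]; exact div_nonneg hnum (by positivity)
    linarith
  · have h5 : s ≤ 2/m^2 := by simp [hs]; linarith
    have h6 : (0:ℝ) ≤ 7/m^3 := by positivity
    linarith

theorem stmt_9 (lam0 : ℕ → ℝ)
    (hroot : ∀ n : ℕ, 1 ≤ n → f n (lam0 n) = 0)
    (hmax : ∀ n : ℕ, 1 ≤ n → ∀ x : ℝ, f n x = 0 → x ≤ lam0 n) :
    ∃ C : ℝ, ∃ n₀ : ℕ, ∀ n : ℕ, n₀ ≤ n →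
      |Real.log (lam0 n) - Real.log n - 2 / (n : ℝ) ^ 2| ≤ C / (n : ℝ) ^ 3 := by
  refine ⟨7, 4, fun n hn => ?_⟩
  have hn1 : 1 ≤ n := le_trans (by norm_num) hn
  have hm4 : (4:ℝ) ≤ (n:ℝ) := by exact_mod_cast hn
  have hm0 : (0:ℝ) < (n:ℝ) := by linarith
  have hm2 : (2:ℝ) ≤ (n:ℝ) := by linarith
  set a : ℝ := ((n:ℝ)^3 + 2*(n:ℝ) - 3)/(n:ℝ)^2 with ha
  set b : ℝ := ((n:ℝ)^2 + 2)/(n:ℝ) with hb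
  have hfa : f n a < 0 := by
    have hnum : (-2*(n:ℝ)^6 + (n:ℝ)^5 - 14*(n:ℝ)^4 + 14*(n:ℝ)^3 - 27*(n:ℝ)^2 + 54*(n:ℝ) - 27)
        < 0 := by nlinarith [pow_pos hm0 2, pow_pos hm0 3, pow_pos hm0 4, pow_pos hm0 6]
    have e : f n a = (-2*(n:ℝ)^6 + (n:ℝ)^5 - 14*(n:ℝ)^4 + 14*(n:ℝ)^3 - 27*(n:ℝ)^2 + 54*(n:ℝ)
        - 27)/(n:ℝ)^6 := by
      unfold f; rw [ha]; field_simp; ring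
    rw [e]
    exact div_neg_of_neg_of_pos hnum (by positivity)
  have hfb : 0 < f n b := by
    have e : f n b = ((n:ℝ)^3 + 4*(n:ℝ)^2 + 4*(n:ℝ) + 8)/(n:ℝ)^3 := by
      unfold f; rw [hb]; field_simp; ring
    rw [e]; positivity
  have hab : a ≤ b := by
    rw [ha, hb, div_le_div_iff₀ (by positivity) (by positivity)]
    nlinarith
  have hmb : (n:ℝ) ≤ b := by
    rw [hb, le_div_iff₀ hm0]; nlinarith
  -- IVT: there is a root in [a, b]
  obtain ⟨x, ⟨hxa, hxb⟩, hfx⟩ : ∃ x ∈ Set.Icc a b, f n x = 0 :=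
    intermediate_value_Icc hab (f_cont n).continuousOn ⟨hfa.le, hfb.le⟩
  have hL_lb : a ≤ lam0 n := hxa.trans (hmax n hn1 x hfx)
  have hL_ub : lam0 n ≤ b := by
    by_contra h
    push_neg at h
    have := f_mono n b (lam0 n) hm2 hmb h.le
    rw [hroot n hn1] at this
    linarith
  have hma : (n:ℝ) ≤ a := by
    rw [ha, le_div_iff₀ (by positivity)]; nlinarith
  have hL0 : 0 < lam0 n := lt_of_lt_of_le (by linarith) hL_lb
  have hlog : Real.log (lam0 n) - Real.log n = Real.log (lam0 n / n) := by
    rw [Real.log_div (ne_of_gt hL0) (ne_of_gt hm0)]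
  have hr_lb : 1 + 2/(n:ℝ)^2 - 3/(n:ℝ)^3 ≤ lam0 n / n := by
    rw [le_div_iff₀ hm0]
    calc (1 + 2/(n:ℝ)^2 - 3/(n:ℝ)^3) * n = a := by rw [ha]; field_simp
      _ ≤ lam0 n := hL_lb
  have hr_ub : lam0 n / n ≤ 1 + 2/(n:ℝ)^2 := by
    rw [div_le_iff₀ hm0]
    calc lam0 n ≤ b := hL_ub
      _ = (1 + 2/(n:ℝ)^2) * n := by rw [hb]; field_simp
  have := log_bound (n:ℝ) (lam0 n / n) hm4 hr_lb hr_ub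
  calc |Real.log (lam0 n) - Real.log n - 2/(n:ℝ)^2|
      = |Real.log (lam0 n / n) - 2/(n:ℝ)^2| := by rw [hlog]
    _ ≤ 7/(n:ℝ)^3 := this
end

section
/- With λ₀, λ₁, λ₂ the real roots of f_n for large n, the quantity ū = -(log|λ₀| - log|λ₂|) - (log|λ₁| - log|λ₂|) satisfies ū = 3/n + O(1/n²) as n → ∞; in particular ū > 0 for all sufficiently large n. -/
section aux11

private lemma aux11_t_neg (x : ℝ) (hx : (10:ℝ) ≤ x) :
    (-1 - 1/x - 2/x^2)^3 - (x-1)*(-1 - 1/x - 2/x^2)^2 - (x+2)*(-1 - 1/x - 2/x^2) - 1 < 0 := by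
  have hx0 : (0:ℝ) < x := by linarith
  have key : x^6 * ((-1 - 1/x - 2/x^2)^3 - (x-1)*(-1 - 1/x - 2/x^2)^2
      - (x+2)*(-1 - 1/x - 2/x^2) - 1)
      = -(2*x^5 + 2*x^4 + 4*x^3 + 2*(x^2+2*x)^2 + (x+2)^3) := by
    field_simp
    ring
  have h1 : x^6 * ((-1 - 1/x - 2/x^2)^3 - (x-1)*(-1 - 1/x - 2/x^2)^2
      - (x+2)*(-1 - 1/x - 2/x^2) - 1) < 0 := by
    rw [key]
    nlinarith [pow_pos hx0 5, pow_pos hx0 4, pow_pos hx0 3]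
  by_contra h
  push_neg at h
  nlinarith [mul_nonneg (le_of_lt (pow_pos hx0 6)) h]

private lemma aux11_s_pos (x : ℝ) (hx : (10:ℝ) ≤ x) :
    0 < (-1 - 1/x + 2/x^2)^3 - (x-1)*(-1 - 1/x + 2/x^2)^2 - (x+2)*(-1 - 1/x + 2/x^2) - 1 := by
  have hx0 : (0:ℝ) < x := by linarith
  have key : x^6 * ((-1 - 1/x + 2/x^2)^3 - (x-1)*(-1 - 1/x + 2/x^2)^2
      - (x+2)*(-1 - 1/x + 2/x^2) - 1)
      = 2*x^5 + 2*x^4 - 4*x^3 - 2*(x^2-2*x)^2 - (x-2)^3 := by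
    field_simp
    ring
  have h1 : 0 < x^6 * ((-1 - 1/x + 2/x^2)^3 - (x-1)*(-1 - 1/x + 2/x^2)^2
      - (x+2)*(-1 - 1/x + 2/x^2) - 1) := by
    rw [key]
    nlinarith [pow_pos hx0 5, pow_pos hx0 4, pow_pos hx0 3, pow_pos hx0 2]
  by_contra h
  push_neg at h
  nlinarith [mul_nonpos_of_nonneg_of_nonpos (le_of_lt (pow_pos hx0 6)) h]

private lemma aux11_two_div_lt (x : ℝ) (hx : (10:ℝ) ≤ x) : 2/x^2 < 1/x := by
  have hx0 : (0:ℝ) < x := by linarith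
  rw [div_lt_div_iff₀ (by positivity) hx0]
  nlinarith

/-- Log estimate: if `1 + 1/x - 2/x² ≤ w ≤ 1 + 1/x + 2/x²`, then
`|log w - 1/x| ≤ 3/x²`. -/
private lemma aux11_log_est (x w : ℝ) (hx : (10:ℝ) ≤ x)
    (hlo : 1 + 1/x - 2/x^2 ≤ w) (hup : w ≤ 1 + 1/x + 2/x^2) :
    1/x - 3/x^2 ≤ Real.log w ∧ Real.log w ≤ 1/x + 2/x^2 := by
  have hx0 : (0:ℝ) < x := by linarith
  have h2x : 2/x^2 < 1/x := aux11_two_div_lt x hx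
  have h1x : 0 < 1/x := by positivity
  have hw0 : (0:ℝ) < w := by linarith
  constructor
  · have h1 : Real.log w⁻¹ ≤ w⁻¹ - 1 := Real.log_le_sub_one_of_pos (by positivity)
    rw [Real.log_inv] at h1
    have hv : (0:ℝ) < 1 + 1/x - 2/x^2 := by linarith
    have h2 : w⁻¹ ≤ (1 + 1/x - 2/x^2)⁻¹ := by
      apply inv_anti₀ hv hlo
    have h3 : (1 + 1/x - 2/x^2)⁻¹ ≤ 1 - 1/x + 3/x^2 := by
      rw [inv_le_iff_one_le_mul₀ hv]
      have key : (1 - 1/x + 3/x^2) * (1 + 1/x - 2/x^2) = 1 + 5/x^3 - 6/x^4 := by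
        field_simp
        ring
      rw [key]
      have h5 : 6/x^4 ≤ 5/x^3 := by
        rw [div_le_div_iff₀ (by positivity) (by positivity)]
        nlinarith [mul_nonneg (by linarith : (0:ℝ) ≤ x - 10) (le_of_lt (pow_pos hx0 3))]
      linarith
    linarith
  · have h1 : Real.log w ≤ w - 1 := Real.log_le_sub_one_of_pos hw0
    linarith

end aux11

set_option maxHeartbeats 1000000 in
theorem stmt_11 (lam0 lam1 lam2 : ℕ → ℝ) (N : ℕ)
    (hroot : ∀ n : ℕ, N ≤ n →
      f n (lam0 n) = 0 ∧ f n (lam1 n) = 0 ∧ f n (lam2 n) = 0)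
    (horder : ∀ n : ℕ, N ≤ n → 0 < lam0 n ∧ lam1 n < 0 ∧ lam2 n < lam1 n) :
    (∃ C : ℝ, ∃ n₀ : ℕ, ∀ n : ℕ, n₀ ≤ n →
      |(-(Real.log |lam0 n| - Real.log |lam2 n|)
          - (Real.log |lam1 n| - Real.log |lam2 n|)) - 3 / (n : ℝ)| ≤ C / (n : ℝ) ^ 2) ∧
    (∃ n₁ : ℕ, ∀ n : ℕ, n₁ ≤ n →
      0 < -(Real.log |lam0 n| - Real.log |lam2 n|)
          - (Real.log |lam1 n| - Real.log |lam2 n|)) := by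
  have main : ∀ n : ℕ, max N 10 ≤ n →
      |(-(Real.log |lam0 n| - Real.log |lam2 n|)
          - (Real.log |lam1 n| - Real.log |lam2 n|)) - 3 / (n : ℝ)| ≤ 9 / (n : ℝ) ^ 2 ∧
      0 < -(Real.log |lam0 n| - Real.log |lam2 n|)
          - (Real.log |lam1 n| - Real.log |lam2 n|) := by
    intro n hn
    have hnN : N ≤ n := le_trans (le_max_left _ _) hn
    have hn10 : (10 : ℕ) ≤ n := le_trans (le_max_right _ _) hn
    obtain ⟨fa, fb, fc⟩ := hroot n hnN
    obtain ⟨ha0, hb0, hcb⟩ := horder n hnN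
    simp only [f] at fa fb fc
    set a := lam0 n with ha_def
    set b := lam1 n with hb_def
    set c := lam2 n with hc_def
    set x : ℝ := (n : ℝ) with hx_def
    have hx : (10 : ℝ) ≤ x := by rw [hx_def]; exact_mod_cast hn10
    clear_value a b c x
    have hx0 : (0 : ℝ) < x := by linarith
    have h2x : 2/x^2 < 1/x := aux11_two_div_lt x hx
    have h1x : 0 < 1/x := by positivity
    have h2xpos : 0 < 2/x^2 := by positivity
    have hab : a ≠ b := by intro h; rw [h] at ha0; linarith
    have hbc : b ≠ c := by intro h; rw [h] at hcb; linarith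
    have hac : a ≠ c := by intro h; rw [h] at ha0; linarith
    -- pairwise equations
    have Eab : a^2 + a*b + b^2 - (x-1)*(a+b) - (x+2) = 0 := by
      have h : (a - b) * (a^2 + a*b + b^2 - (x-1)*(a+b) - (x+2)) = 0 := by
        linear_combination fa - fb
      exact (mul_eq_zero.mp h).resolve_left (sub_ne_zero.mpr hab)
    have Ebc : b^2 + b*c + c^2 - (x-1)*(b+c) - (x+2) = 0 := by
      have h : (b - c) * (b^2 + b*c + c^2 - (x-1)*(b+c) - (x+2)) = 0 := by
        linear_combination fb - fc
      exact (mul_eq_zero.mp h).resolve_left (sub_ne_zero.mpr hbc)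
    -- Vieta
    have hs : a + b + c = x - 1 := by
      have h : (a - c) * (a + b + c - (x-1)) = 0 := by
        linear_combination Eab - Ebc
      have := (mul_eq_zero.mp h).resolve_left (sub_ne_zero.mpr hac)
      linarith
    have hp : a*b + b*c + c*a = -(x+2) := by
      linear_combination (a+b) * hs - Eab
    have hq : a*b*c = 1 := by
      linear_combination fc - c^2 * hs + c * hp
    -- factorization
    have hfac : ∀ z : ℝ, z^3 - (x-1)*z^2 - (x+2)*z - 1 = (z-a)*(z-b)*(z-c) := by
      intro z
      linear_combination z^2 * hs - z * hp + hq
    -- c < -1 < b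
    have hfm1 : ((-1:ℝ)-a)*((-1:ℝ)-b)*((-1:ℝ)-c) = 1 := by
      have h := hfac (-1)
      linarith [h]
    have hkey : ((-1:ℝ)-b)*((-1:ℝ)-c) < 0 := by
      by_contra h
      push_neg at h
      have h2 : ((-1:ℝ)-a) * (((-1:ℝ)-b)*((-1:ℝ)-c)) ≤ 0 :=
        mul_nonpos_of_nonpos_of_nonneg (by linarith) h
      nlinarith only [hfm1, h2]
    have hb1 : -1 < b := by
      by_contra h
      push_neg at h
      nlinarith only [hkey, h, hcb]
    have hc1 : c < -1 := by
      by_contra h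
      push_neg at h
      nlinarith only [hkey, h, hb1]
    -- lower bracket:  -1 - 1/x - 2/x² < c
    have hct : -1 - 1/x - 2/x^2 < c := by
      have hft := aux11_t_neg x hx
      rw [hfac (-1 - 1/x - 2/x^2)] at hft
      have hta : -1 - 1/x - 2/x^2 - a < 0 := by linarith
      have htb : -1 - 1/x - 2/x^2 - b < 0 := by linarith
      by_contra h
      push_neg at h
      nlinarith only [hft, hta, htb, h,
        mul_pos (by linarith : (0:ℝ) < a - (-1 - 1/x - 2/x^2))
          (by linarith : (0:ℝ) < b - (-1 - 1/x - 2/x^2))]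
    -- upper bracket:  c < -1 - 1/x + 2/x²
    have hcs : c < -1 - 1/x + 2/x^2 := by
      have hfs := aux11_s_pos x hx
      rw [hfac (-1 - 1/x + 2/x^2)] at hfs
      have hsa : -1 - 1/x + 2/x^2 - a < 0 := by linarith
      have hsb : -1 - 1/x + 2/x^2 - b < 0 := by linarith
      by_contra h
      push_neg at h
      nlinarith only [hfs, hsa, hsb, h,
        mul_pos (by linarith : (0:ℝ) < a - (-1 - 1/x + 2/x^2))
          (by linarith : (0:ℝ) < b - (-1 - 1/x + 2/x^2))]
    -- bounds on -c
    have hc0 : c < 0 := by linarith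
    have hcpos : 0 < -c := by linarith
    have hup : -c ≤ 1 + 1/x + 2/x^2 := by linarith
    have hlo : 1 + 1/x - 2/x^2 ≤ -c := by linarith
    obtain ⟨hLlo, hLup⟩ := aux11_log_est x (-c) hx hlo hup
    -- rewrite expression as 3 log(-c)
    have habs_a : |a| = a := abs_of_pos ha0
    have habs_b : |b| = -b := abs_of_neg hb0
    have habs_c : |c| = -c := abs_of_neg hc0
    have hbne : (-b) ≠ 0 := ne_of_gt (by linarith)
    have hane : a ≠ 0 := ne_of_gt ha0
    have hcne : (-c) ≠ 0 := ne_of_gt hcpos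
    have hsum0 : Real.log a + Real.log (-b) + Real.log (-c) = 0 := by
      have hmul : a * -b * -c = 1 := by linear_combination hq
      have h1 := Real.log_mul (mul_ne_zero hane hbne) hcne
      rw [hmul, Real.log_one] at h1
      rw [Real.log_mul hane hbne] at h1
      linarith
    have hexpr : -(Real.log |a| - Real.log |c|) - (Real.log |b| - Real.log |c|)
        = 3 * Real.log (-c) := by
      rw [habs_a, habs_b, habs_c]
      linarith
    constructor
    · rw [hexpr, abs_le]
      have h3x : 3 / x = 3 * (1/x) := by ring
      have h9x : 9 / x^2 = 3 * (3/x^2) := by ring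
      constructor
      · rw [h3x, h9x]
        linarith only [hLlo]
      · rw [h3x, h9x]
        have h23 : (2:ℝ)/x^2 ≤ 3/x^2 := by
          have : (0:ℝ) < x^2 := by positivity
          rw [div_le_div_iff₀ this this]
          nlinarith
        linarith only [hLup, h23]
    · rw [hexpr]
      have hc_gt1 : 1 < -c := by linarith
      have : 0 < Real.log (-c) := Real.log_pos hc_gt1
      linarith
  constructor
  · exact ⟨9, max N 10, fun n hn => (main n hn).1⟩
  · exact ⟨max N 10, fun n hn => (main n hn).2⟩
end

section
/- With λ₂(n) the real root of f_n near -1 for large n, we have log|λ₂(n)| = 1/n - 1/(2n²) + O(1/n³) as n → ∞. -/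
set_option maxHeartbeats 2000000

open Real Finset in
lemma log_quad (u : ℝ) (h0 : 0 < u) (h1 : u ≤ 1/2) :
    |Real.log (1+u) - u + u^2/2| ≤ 2*u^3 := by
  have h := Real.abs_log_sub_add_sum_range_le (x := -u) (by rw [abs_of_nonpos] <;> linarith) 2
  rw [Finset.sum_range_succ, Finset.sum_range_succ, Finset.sum_range_zero] at h
  rw [abs_of_nonpos (by linarith : -u ≤ 0)] at h
  have h2 : |(-u) ^ 1 / 1 + (-u)^2/2 + Real.log (1+u)| ≤ u^3 / (1 - u) := by
    convert h using 2 <;> push_cast <;> ring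
  have h3 : u^3/(1-u) ≤ 2*u^3 := by
    rw [div_le_iff₀ (by linarith)]
    nlinarith [pow_pos h0 3]
  calc |Real.log (1+u) - u + u^2/2| = |(-u)^1/1 + (-u)^2/2 + Real.log (1+u)| := by ring_nf
    _ ≤ u^3/(1-u) := h2
    _ ≤ 2*u^3 := h3

lemma aux_e (m e : ℝ) (hm : 10 ≤ m)
    (hide : e*(m^3+m^2+4*m+3) = -(2*m+1) - (m^2+2*m+3)*e^2 - e^3)
    (heu : e ≤ 1/5) (hel2 : -(1/5) ≤ e) :
    -3 ≤ m^2*e ∧ m^2*e ≤ 3 := by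
  have hK : (0:ℝ) < m^3+m^2+4*m+3 := by positivity
  have hp1 : (0:ℝ) ≤ (m-10)*m^2 := mul_nonneg (by linarith) (sq_nonneg m)
  have hp2 : (0:ℝ) ≤ (m-1)*m := by nlinarith
  have hen : e ≤ 0 := by
    by_contra h; push_neg at h
    nlinarith [mul_pos h hK, mul_nonneg (sq_nonneg e) (by positivity : (0:ℝ) ≤ m^2+2*m+3),
      mul_nonneg (sq_nonneg e) (by linarith : (0:ℝ) ≤ 1/5 - e)]
  have h1 : m^2*e ≤ 3 := by nlinarith [mul_nonneg (sq_nonneg m) (neg_nonneg.2 hen)]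
  have he2 : e^2 ≤ 1/25 := by nlinarith
  have he3 : (0:ℝ) ≤ -e^3 := by nlinarith [sq_nonneg e]
  have hstep : -(2*m+1) - (m^2+2*m+3)*(1/25) ≤ e*(m^3+m^2+4*m+3) := by
    have hq := mul_le_mul_of_nonneg_left he2 (by positivity : (0:ℝ) ≤ m^2+2*m+3)
    linarith [hide.ge]
  have he1 : -(1/4) ≤ m*e := by
    by_contra h; push_neg at h
    have hc := mul_le_mul_of_nonneg_left hstep (by linarith : (0:ℝ) ≤ m)
    have hd : (m*e)*(m^3+m^2+4*m+3) < -(1/4)*(m^3+m^2+4*m+3) :=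
      mul_lt_mul_of_pos_right h hK
    nlinarith [hc, hd, hp1, hp2]
  have hmen : m*e ≤ 0 := by
    have : 0 ≤ m * (-e) := mul_nonneg (by linarith) (by linarith)
    nlinarith [this]
  have hme2 : (m*e)^2 ≤ 1/16 := by nlinarith [he1, hmen]
  have hstep2 : -(2*m+1) - (m^2+2*m+3)*e^2 ≤ e*(m^3+m^2+4*m+3) := by
    linarith [hide.ge]
  have h2 : -3 ≤ m^2*e := by
    by_contra h; push_neg at h
    have hc := mul_le_mul_of_nonneg_left hstep2 (by positivity : (0:ℝ) ≤ m^2)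
    have hd : (m^2*e)*(m^3+m^2+4*m+3) < -3*(m^3+m^2+4*m+3) :=
      mul_lt_mul_of_pos_right h hK
    have hq := mul_le_mul_of_nonneg_left hme2 (by positivity : (0:ℝ) ≤ m^2+2*m+3)
    nlinarith [hc, hd, hq, hp1, hp2, hm]
  exact ⟨h2, h1⟩

lemma aux_u (m u : ℝ) (hm : 10 ≤ m) (hu1 : -(1/2) < u) (hu2 : u < 1)
    (heq : u^3 + (m+2)*u^2 + (m-1)*u - 1 = 0) :
    0 < u ∧ m*u ≤ 6/5 ∧ -3 ≤ m^2*(m*u-1) ∧ m^2*(m*u-1) ≤ 3 := by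
  have h0 : 0 < u := by
    by_contra h; push_neg at h
    have h1 : u^3 ≤ 0 := by nlinarith [sq_nonneg u]
    have h2 : (m+2)*u^2 + (m-1)*u ≤ 0 := by
      nlinarith [mul_nonneg (neg_nonneg.2 h) (by nlinarith : (0:ℝ) ≤ (m+2)*u + (m-1))]
    linarith
  have hub : (m-1)*u ≤ 1 := by
    nlinarith [mul_pos (mul_pos h0 h0) h0, mul_nonneg (sq_nonneg u) (by linarith : (0:ℝ) ≤ m+2)]
  have hmu : m*u ≤ 6/5 := by
    nlinarith [mul_nonneg h0.le (by linarith : (0:ℝ) ≤ m - 10)]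
  obtain ⟨s, hs⟩ : ∃ s, s = m*u := ⟨_, rfl⟩
  have hs0 : 0 < s := by rw [hs]; positivity
  have hsu : s ≤ 6/5 := by rw [hs]; exact hmu
  have hids : s^3 + m*(m+2)*s^2 + m^2*(m-1)*s - m^3 = 0 := by
    rw [hs]; linear_combination m^3*heq
  have hsq : s^2 ≤ 36/25 := by nlinarith
  have haux : m*(m+2)*s^2 ≤ (36/25)*(m*(m+2)) := by nlinarith [hsq]
  have hel : 4/5 ≤ s := by
    nlinarith [haux, mul_nonneg (mul_nonneg (by linarith : (0:ℝ) ≤ m-10) (by linarith : (0:ℝ) ≤ m-10)) (by linarith : (0:ℝ) ≤ m-10), mul_nonneg (by linarith : (0:ℝ) ≤ m-10) (by linarith : (0:ℝ) ≤ m)]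
  have hide : (s-1)*(m^3+m^2+4*m+3) = -(2*m+1) - (m^2+2*m+3)*(s-1)^2 - (s-1)^3 := by
    linear_combination hids
  obtain ⟨hA, hB⟩ := aux_e m (s-1) hm hide (by linarith) (by linarith)
  rw [hs] at hA hB
  exact ⟨h0, hmu, hA, hB⟩

theorem stmt_12 (lam2 : ℕ → ℝ) (N : ℕ)
    (hroot : ∀ n : ℕ, N ≤ n → f n (lam2 n) = 0)
    (hloc : ∀ n : ℕ, N ≤ n → lam2 n ∈ Set.Ioo (-2 : ℝ) (-1 / 2)) :
    ∃ C : ℝ, ∃ n₀ : ℕ, ∀ n : ℕ, n₀ ≤ n →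
      |Real.log |lam2 n| - 1 / (n : ℝ) + 1 / (2 * (n : ℝ) ^ 2)| ≤ C / (n : ℝ) ^ 3 := by
  refine ⟨10, max N 10, fun n hn => ?_⟩
  have hN : N ≤ n := le_trans (le_max_left _ _) hn
  have h10 : (10 : ℕ) ≤ n := le_trans (le_max_right _ _) hn
  obtain ⟨m, hm_def⟩ : ∃ m : ℝ, (n : ℝ) = m := ⟨_, rfl⟩
  rw [hm_def]
  have hm : (10 : ℝ) ≤ m := by rw [← hm_def]; exact_mod_cast h10
  have hm0 : (0 : ℝ) < m := by linarith
  have hm3 : (0 : ℝ) < m^3 := by positivity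
  obtain ⟨hl1, hl2⟩ := hloc n hN
  obtain ⟨u, hu⟩ : ∃ u, lam2 n = -1 - u := ⟨-1 - lam2 n, by ring⟩
  have hu1 : -(1/2) < u := by rw [hu] at hl2; linarith
  have hu2 : u < 1 := by rw [hu] at hl1; linarith
  have heq : u^3 + (m+2)*u^2 + (m-1)*u - 1 = 0 := by
    have h := hroot n hN
    rw [f, hu, hm_def] at h
    linear_combination -h
  obtain ⟨h0, hmu, hA, hB⟩ := aux_u m u hm hu1 hu2 heq
  have huh : u ≤ 1/2 := by nlinarith
  have habs : |lam2 n| = 1 + u := by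
    rw [hu, abs_of_neg (by linarith : (-1 : ℝ) - u < 0)]; ring
  obtain ⟨L, hL_def⟩ : ∃ L : ℝ, Real.log (1 + u) = L := ⟨_, rfl⟩
  have hlog := log_quad u h0 huh
  rw [hL_def] at hlog
  obtain ⟨hlog1, hlog2⟩ := abs_le.1 hlog
  -- scale by m^3
  have F1 : m^3*(L - u + u^2/2) ≤ 2*(m^3*u^3) := by
    have := mul_le_mul_of_nonneg_left hlog2 (le_of_lt hm3)
    nlinarith [this]
  have F1' : -(2*(m^3*u^3)) ≤ m^3*(L - u + u^2/2) := by
    have := mul_le_mul_of_nonneg_left hlog1 (le_of_lt hm3)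
    nlinarith [this]
  have F2 : m^3*u^3 ≤ 216/125 := by nlinarith [hmu, h0, sq_nonneg (m*u)]
  have F2' : 0 ≤ m^3*u^3 := by positivity
  -- F4 : |m*((m*u-1)*(m*u+1))| ≤ 7/10
  have hs1 : m*u + 1 ≤ 11/5 := by linarith
  have hs2 : (0:ℝ) < m*u + 1 := by positivity
  have F4 : m*((m*u-1)*(m*u+1)) ≤ 7/10 := by
    by_contra h; push_neg at h
    have hc := mul_lt_mul_of_pos_left h hm0
    have hq : (0:ℝ) ≤ (3 - m^2*(m*u-1))*(m*u+1) := mul_nonneg (by linarith) (by linarith)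
    linarith [hc, hq, hs1]
  have F4' : -(7/10) ≤ m*((m*u-1)*(m*u+1)) := by
    by_contra h; push_neg at h
    have hc := mul_lt_mul_of_pos_left h hm0
    have hq : (0:ℝ) ≤ (m^2*(m*u-1) + 3)*(m*u+1) := mul_nonneg (by linarith) (by linarith)
    linarith [hc, hq, hs1]
  -- key two-sided bound
  have key1 : m^3*L - m^2 + m/2 ≤ 10 := by linarith [F1, F2, hB, F4']
  have key2 : -10 ≤ m^3*L - m^2 + m/2 := by linarith [F1', F2, F2', hA, F4]
  rw [habs, hL_def]
  have expand : (L - 1/m + 1/(2*m^2))*m^3 = m^3*L - m^2 + m/2 := by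
    field_simp
  rw [abs_le]
  constructor
  · have hne : -(10/m^3) = (-10)/m^3 := by ring
    rw [hne, div_le_iff₀ hm3]
    linarith [key2, expand]
  · rw [le_div_iff₀ hm3]
    linarith [key1, expand]
end

section
/- With λ₁(n) the real root of f_n near 0 for large n, we have log|λ₁(n)| = -log n - 1/n - 3/(2n²) + O(1/n³) as n → ∞. -/
/-!
On `[-1/2, 0]` the cubic `f n` is strictly decreasing, and for `t = 1/n` its sign changes between
`-t + t² + t³ ∓ 10 t⁴`, so the root is `λ₁(n) = -t (1 - t - t²) + O(t⁴)`. Hence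
`log |λ₁(n)| = log t + log (1 - t - t²) + O(t³)`, and the two-term Taylor expansion of `log (1 - x)`
at `x = t + t²` gives `log (1 - t - t²) = -t - 3t²/2 + O(t³)`.
-/

open Real

lemma abs_log_le_two_mul_abs_sub_one {y : ℝ} (h : |y - 1| ≤ 1 / 2) : |log y| ≤ 2 * |y - 1| := by
  have h₀ := abs_log_sub_add_sum_range_le (x := 1 - y) (by rw [abs_sub_comm]; linarith) 0
  rw [abs_sub_comm] at h₀
  simp only [Finset.range_zero, Finset.sum_empty, zero_add, sub_sub_cancel, pow_one] at h₀
  calc |log y| ≤ |y - 1| / (1 - |y - 1|) := h₀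
    _ ≤ 2 * |y - 1| := by rw [div_le_iff₀ (by linarith)]; nlinarith [abs_nonneg (y - 1)]

lemma abs_log_one_sub_add_add_sq_div_two_le {x : ℝ} (h : |x| ≤ 1 / 2) :
    |log (1 - x) + x + x ^ 2 / 2| ≤ 2 * |x| ^ 3 := by
  have h₂ := abs_log_sub_add_sum_range_le (x := x) (by linarith) 2
  norm_num [Finset.sum_range_succ] at h₂
  calc |log (1 - x) + x + x ^ 2 / 2| = |x + x ^ 2 / 2 + log (1 - x)| := by ring_nf
    _ ≤ |x| ^ 3 / (1 - |x|) := h₂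
    _ ≤ 2 * |x| ^ 3 := by rw [div_le_iff₀ (by linarith)]; nlinarith [pow_nonneg (abs_nonneg x) 3]

lemma strictAntiOn_f (n : ℕ) : StrictAntiOn (f n) (Set.Icc (-1 / 2) 0) := by
  rintro x ⟨hx₁, hx₂⟩ y ⟨hy₁, hy₂⟩ hxy
  have hfac : f n y - f n x =
      (y - x) * (y ^ 2 + y * x + x ^ 2 - ((n : ℝ) - 1) * (y + x) - (n + 2)) := by
    unfold f; ring
  have hneg : y ^ 2 + y * x + x ^ 2 - ((n : ℝ) - 1) * (y + x) - (n + 2) < 0 := by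
    nlinarith [mul_nonneg n.cast_nonneg (by linarith : (0 : ℝ) ≤ 1 + (y + x))]
  nlinarith

noncomputable def scaledF (t x : ℝ) : ℝ :=
  t * x ^ 3 - (1 - t) * x ^ 2 - (1 + 2 * t) * x - t

lemma mul_f_eq_scaledF {n : ℕ} {t : ℝ} (ht : t * n = 1) (x : ℝ) : t * f n x = scaledF t x := by
  unfold f scaledF; linear_combination (-(x ^ 2) - x) * ht

lemma scaledF_lower_pos {t : ℝ} (ht₀ : 0 < t) (ht₁ : t ≤ 1 / 100) :
    0 < scaledF t (-t + t ^ 2 + t ^ 3 - 10 * t ^ 4) := by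
  unfold scaledF
  have h₂ : t ^ 2 ≤ (1 / 100) ^ 2 := by gcongr
  have h₃ : t ^ 3 ≤ (1 / 100) ^ 3 := by gcongr
  have h₄ : 0 < t ^ 4 := by positivity
  nlinarith [mul_pos h₄ ht₀, mul_pos (mul_pos h₄ ht₀) ht₀, mul_le_mul_of_nonneg_left h₃ h₄.le,
    mul_le_mul_of_nonneg_left h₂ h₄.le]

lemma scaledF_upper_neg {t : ℝ} (ht₀ : 0 < t) (ht₁ : t ≤ 1 / 100) :
    scaledF t (-t + t ^ 2 + t ^ 3 + 10 * t ^ 4) < 0 := by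
  unfold scaledF
  have h₂ : t ^ 2 ≤ (1 / 100) ^ 2 := by gcongr
  have h₃ : t ^ 3 ≤ (1 / 100) ^ 3 := by gcongr
  have h₄ : 0 < t ^ 4 := by positivity
  nlinarith [mul_pos h₄ ht₀, mul_pos (mul_pos h₄ ht₀) ht₀, mul_le_mul_of_nonneg_left h₃ h₄.le,
    mul_le_mul_of_nonneg_left h₂ h₄.le]

lemma abs_root_sub_approx_lt {n : ℕ} {t x : ℝ} (ht : t * n = 1) (ht₀ : 0 < t) (ht₁ : t ≤ 1 / 100)
    (hx : x ∈ Set.Icc (-1 / 2) 0) (hfx : f n x = 0) : |x - (-t + t ^ 2 + t ^ 3)| < 10 * t ^ 4 := by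
  have h₂ : t ^ 2 ≤ t / 100 := by nlinarith
  have h₄ : t ^ 4 ≤ t ^ 3 := pow_le_pow_of_le_one ht₀.le (by linarith) (by norm_num)
  have h₃ : t ^ 3 ≤ t ^ 2 := pow_le_pow_of_le_one ht₀.le (by linarith) (by norm_num)
  have hlo : -t + t ^ 2 + t ^ 3 - 10 * t ^ 4 ∈ Set.Icc (-1 / 2) 0 := by
    constructor <;> nlinarith [pow_pos ht₀ 4]
  have hhi : -t + t ^ 2 + t ^ 3 + 10 * t ^ 4 ∈ Set.Icc (-1 / 2) 0 := by
    constructor <;> nlinarith [pow_pos ht₀ 4]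
  have hflo : f n x < f n (-t + t ^ 2 + t ^ 3 - 10 * t ^ 4) := by
    rw [hfx]
    refine pos_of_mul_pos_right ?_ ht₀.le
    rw [mul_f_eq_scaledF ht]
    exact scaledF_lower_pos ht₀ ht₁
  have hfhi : f n (-t + t ^ 2 + t ^ 3 + 10 * t ^ 4) < f n x := by
    rw [hfx]
    refine neg_of_mul_neg_right ?_ ht₀.le
    rw [mul_f_eq_scaledF ht]
    exact scaledF_upper_neg ht₀ ht₁
  have hanti := strictAntiOn_f n
  rw [abs_sub_lt_iff]
  constructor
  · linarith [(hanti.lt_iff_gt hhi hx).mp hfhi]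
  · linarith [(hanti.lt_iff_gt hx hlo).mp hflo]

lemma abs_log_one_sub_sub_sq_add_le {t : ℝ} (ht₀ : 0 ≤ t) (ht₁ : t ≤ 1 / 4) :
    |log (1 - t - t ^ 2) + t + 3 / 2 * t ^ 2| ≤ 6 * t ^ 3 := by
  have hx : |t + t ^ 2| = t + t ^ 2 := abs_of_nonneg (by positivity)
  have h := abs_log_one_sub_add_add_sq_div_two_le (x := t + t ^ 2) (by rw [hx]; nlinarith)
  rw [hx, sub_add_eq_sub_sub] at h
  have hcube : (t + t ^ 2) ^ 3 ≤ 2 * t ^ 3 := by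
    have : (t + t ^ 2) ^ 3 ≤ (5 / 4 * t) ^ 3 := by gcongr; nlinarith
    nlinarith [pow_nonneg ht₀ 3]
  have ht₄ : t ^ 4 ≤ t ^ 3 := pow_le_pow_of_le_one ht₀ (by linarith) (by norm_num)
  calc |log (1 - t - t ^ 2) + t + 3 / 2 * t ^ 2|
      = |(log (1 - t - t ^ 2) + (t + t ^ 2) + (t + t ^ 2) ^ 2 / 2) - (t ^ 3 + t ^ 4 / 2)| := by
        ring_nf
    _ ≤ 2 * (t + t ^ 2) ^ 3 + (t ^ 3 + t ^ 4 / 2) :=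
        (abs_sub _ _).trans (add_le_add h (abs_of_nonneg (by positivity)).le)
    _ ≤ 6 * t ^ 3 := by linarith [pow_nonneg ht₀ 3]

lemma abs_log_abs_root_sub_expansion_le {n : ℕ} {t x : ℝ} (ht : t * n = 1) (ht₀ : 0 < t)
    (ht₁ : t ≤ 1 / 100) (hx : x ∈ Set.Icc (-1 / 2) 0) (hfx : f n x = 0) :
    |log |x| - log t + t + 3 / 2 * t ^ 2| ≤ 50 * t ^ 3 := by
  set w := 1 - t - t ^ 2
  have hw₀ : 1 / 2 ≤ w := by nlinarith
  have hroot : |(-x) - t * w| < 10 * t ^ 4 := by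
    rw [← abs_neg]; convert abs_root_sub_approx_lt ht ht₀ ht₁ hx hfx using 2; ring
  have ht₃ : t ^ 3 ≤ t := pow_le_of_le_one ht₀.le (by linarith) (by norm_num)
  have ht₄ : t ^ 4 ≤ t := pow_le_of_le_one ht₀.le (by linarith) (by norm_num)
  have hx₀ : 0 < -x := by nlinarith [abs_lt.mp hroot]
  have htw : 0 < t * w := by positivity
  have hratio : |(-x) / (t * w) - 1| ≤ 20 * t ^ 3 := by
    rw [div_sub_one htw.ne', abs_div, abs_of_pos htw, div_le_iff₀ htw]
    nlinarith [mul_le_mul_of_nonneg_left hw₀ (pow_pos ht₀ 4).le]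
  have hsplit : log |x| = log ((-x) / (t * w)) + log t + log w := by
    rw [abs_of_neg (by linarith : x < 0), log_div hx₀.ne' htw.ne', log_mul ht₀.ne' (by linarith)]
    ring
  have hrem := abs_log_le_two_mul_abs_sub_one (hratio.trans (by linarith))
  have hlogw := abs_log_one_sub_sub_sq_add_le ht₀.le (by linarith)
  calc |log |x| - log t + t + 3 / 2 * t ^ 2|
      = |log ((-x) / (t * w)) + (log w + t + 3 / 2 * t ^ 2)| := by rw [hsplit]; ring_nf
    _ ≤ 2 * (20 * t ^ 3) + 6 * t ^ 3 :=
        (abs_add_le _ _).trans (add_le_add (hrem.trans (by linarith)) hlogw)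
    _ ≤ 50 * t ^ 3 := by nlinarith [pow_pos ht₀ 3]

theorem stmt_13 (lam1 : ℕ → ℝ) (N : ℕ)
    (hroot : ∀ n : ℕ, N ≤ n → f n (lam1 n) = 0)
    (hloc : ∀ n : ℕ, N ≤ n → lam1 n ∈ Set.Ioo (-1 / 2 : ℝ) 0) :
    ∃ C : ℝ, ∃ n₀ : ℕ, ∀ n : ℕ, n₀ ≤ n →
      |Real.log |lam1 n| + Real.log n + 1 / (n : ℝ) + 3 / (2 * (n : ℝ) ^ 2)|
        ≤ C / (n : ℝ) ^ 3 := by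
  refine ⟨50, max N 100, fun n hn => ?_⟩
  have hN : N ≤ n := le_of_max_le_left hn
  have h100 : (100 : ℝ) ≤ n := by exact_mod_cast le_of_max_le_right hn
  have hn₀ : (0 : ℝ) < n := by linarith
  have ht : (n : ℝ)⁻¹ * n = 1 := inv_mul_cancel₀ hn₀.ne'
  have ht₁ : (n : ℝ)⁻¹ ≤ 1 / 100 := by rw [one_div]; exact inv_anti₀ (by norm_num) h100
  obtain ⟨hlo, hhi⟩ := hloc n hN
  have key := abs_log_abs_root_sub_expansion_le ht (inv_pos.mpr hn₀) ht₁ ⟨hlo.le, hhi.le⟩ (hroot n hN)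
  rw [log_inv] at key
  convert key using 2 <;> field_simp; ring
end
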